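/- Let X be a paracompact space with dim X = 0, Y a complete metric space, A ⊆ X a closed subset, and φ : X → Set Y a lower semicontinuous map with nonempty closed values. Then every continuous selection of φ restricted to A extends to a continuous selection of φ on all of X. -/

import Mathlib

/-!
A space whose open covers have disjoint open refinements admits, for every open cover `{U i}`, a
locally constant choice of index `f x` with `x ∈ U (f x)`. Lower semicontinuity makes
`{x | φ x meets ball y δ}` open, so this yields continuous `fₙ` with `φ x` meeting
`ball (fₙ x) 2⁻ⁿ`; intersecting the cover with `fₙ⁻¹' (ball y 2⁻ⁿ)` keeps `fₙ₊₁` within `2⁻ⁿ`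
of `fₙ`. As `Y` is complete the `fₙ` converge uniformly, and the limit lies in the closed values
of `φ`. For the extension, replace `φ x` by `{g x}` on `A`: since `A` is closed and `g` is a
continuous selection, this carrier is still lower semicontinuous, and its selections extend `g`.
-/

section

open Filter Metric Set Topology

variable {X Y : Type*}

def HasDisjointOpenRefinements (X : Type*) [TopologicalSpace X] : Prop :=
  ∀ 𝒰 : Set (Set X), (∀ U ∈ 𝒰, IsOpen U) → ⋃₀ 𝒰 = univ →
    ∃ 𝒱 : Set (Set X), (∀ V ∈ 𝒱, IsOpen V) ∧ (∀ V ∈ 𝒱, ∃ U ∈ 𝒰, V ⊆ U) ∧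
      ⋃₀ 𝒱 = univ ∧ 𝒱.Pairwise Disjoint

def IsLowerSemicontinuousMultimap [TopologicalSpace X] [TopologicalSpace Y] (φ : X → Set Y) :
    Prop :=
  ∀ U : Set Y, IsOpen U → IsOpen {x | (φ x ∩ U).Nonempty}

theorem exists_seq_of_forall_exists_succ {α : Type*} (Q : ℕ → α → Prop) (R : ℕ → α → α → Prop)
    (h₀ : ∃ a, Q 0 a) (hsucc : ∀ n a, Q n a → ∃ b, Q (n + 1) b ∧ R n a b) :
    ∃ u : ℕ → α, ∀ n, Q n (u n) ∧ R n (u n) (u (n + 1)) := by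
  obtain ⟨a₀, ha₀⟩ := h₀
  choose next hnextQ hnextR using hsucc
  let v : ∀ n, {a // Q n a} := fun n =>
    Nat.rec ⟨a₀, ha₀⟩ (fun n a => ⟨next n a.1 a.2, hnextQ n a.1 a.2⟩) n
  exact ⟨fun n => (v n).1, fun n => ⟨(v n).2, hnextR n (v n).1 (v n).2⟩⟩

theorem exists_tendstoUniformly_of_dist_succ_le_geometric [PseudoMetricSpace Y] [CompleteSpace Y]
    {F : ℕ → X → Y} {C r : ℝ} (hr₀ : 0 ≤ r) (hr₁ : r < 1)
    (hF : ∀ n x, dist (F n x) (F (n + 1) x) ≤ C * r ^ n) :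
    ∃ f : X → Y, TendstoUniformly F f atTop := by
  choose f hf using fun x =>
    cauchySeq_tendsto_of_complete (cauchySeq_of_le_geometric r C hr₁ (hF · x))
  have hbound : Tendsto (fun n => C * r ^ n / (1 - r)) atTop (𝓝 0) := by
    simpa using ((tendsto_pow_atTop_nhds_zero_of_lt_one hr₀ hr₁).const_mul C).div_const (1 - r)
  refine ⟨f, Metric.tendstoUniformly_iff.2 fun ε hε => ?_⟩
  filter_upwards [hbound.eventually (gt_mem_nhds hε)] with n hn x
  rw [dist_comm]
  exact (dist_le_of_le_geometric_of_tendsto r C hr₁ (hF · x) (hf x) n).trans_lt hn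

theorem IsClosed.mem_of_tendsto_of_inter_ball_nonempty [PseudoMetricSpace Y] {s : Set Y}
    (hs : IsClosed s) {u : ℕ → Y} {a : Y} (hu : Tendsto u atTop (𝓝 a)) {ε : ℕ → ℝ}
    (hε : Tendsto ε atTop (𝓝 0)) (hmeet : ∀ n, (s ∩ ball (u n) (ε n)).Nonempty) : a ∈ s := by
  choose y hys hyu using hmeet
  have hdist : Tendsto (fun n => dist (u n) (y n)) atTop (𝓝 0) :=
    squeeze_zero (fun _ => dist_nonneg) (fun n => (dist_comm _ _).trans_le (hyu n).le) hε
  exact hs.mem_of_tendsto (hu.congr_dist hdist) (Eventually.of_forall hys)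

namespace HasDisjointOpenRefinements

variable [TopologicalSpace X] (hX : HasDisjointOpenRefinements X)
include hX

theorem exists_isLocallyConstant_mem {ι : Type*} (U : ι → Set X) (hU : ∀ i, IsOpen (U i))
    (hcov : ∀ x, ∃ i, x ∈ U i) : ∃ f : X → ι, IsLocallyConstant f ∧ ∀ x, x ∈ U (f x) := by
  obtain ⟨𝒱, h𝒱open, h𝒱sub, h𝒱cov, h𝒱disj⟩ := hX (range U) (forall_mem_range.2 hU)
    (eq_univ_of_forall fun x =>
      let ⟨i, hi⟩ := hcov x
      mem_sUnion.2 ⟨U i, mem_range_self i, hi⟩)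
  have hindex : ∀ V : 𝒱, ∃ i, (V : Set X) ⊆ U i := fun V => by
    obtain ⟨_, ⟨i, rfl⟩, hVi⟩ := h𝒱sub V V.2
    exact ⟨i, hVi⟩
  have hpiece : ∀ x, ∃ V : 𝒱, x ∈ (V : Set X) := fun x => by
    obtain ⟨V, hV, hxV⟩ := mem_sUnion.1 (h𝒱cov.symm ▸ mem_univ x)
    exact ⟨⟨V, hV⟩, hxV⟩
  choose index hindex using hindex
  choose piece hpiece using hpiece
  have hpiece_eq : ∀ x, ∀ x' ∈ (piece x : Set X), piece x' = piece x := fun x x' hx' =>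
    Subtype.ext <|
      PairwiseDisjoint.elim_set (f := id) h𝒱disj (piece x').2 (piece x).2 x' (hpiece x') hx'
  refine ⟨fun x => index (piece x), (IsLocallyConstant.iff_exists_open _).2 fun x => ?_,
    fun x => hindex _ (hpiece x)⟩
  exact ⟨piece x, h𝒱open _ (piece x).2, hpiece x, fun x' hx' => by rw [hpiece_eq x x' hx']⟩

section Approximation

variable [PseudoMetricSpace Y] {φ : X → Set Y} (hφ : IsLowerSemicontinuousMultimap φ)
include hφ

theorem exists_continuous_inter_ball_nonempty (hne : ∀ x, (φ x).Nonempty) {δ : ℝ} (hδ : 0 < δ) :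
    ∃ f : X → Y, Continuous f ∧ ∀ x, (φ x ∩ ball (f x) δ).Nonempty := by
  obtain ⟨f, hf, hfmem⟩ := hX.exists_isLocallyConstant_mem
    (fun y => {x | (φ x ∩ ball y δ).Nonempty}) (fun y => hφ _ isOpen_ball)
    (fun x => (hne x).imp fun y hy => ⟨y, hy, mem_ball_self hδ⟩)
  exact ⟨f, hf.continuous, hfmem⟩

theorem exists_continuous_dist_lt_of_inter_ball_nonempty {f : X → Y} (hf : Continuous f)
    {ε δ : ℝ} (hδ : 0 < δ) (hfφ : ∀ x, (φ x ∩ ball (f x) ε).Nonempty) :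
    ∃ f' : X → Y, Continuous f' ∧ (∀ x, (φ x ∩ ball (f' x) δ).Nonempty) ∧
      ∀ x, dist (f x) (f' x) < ε := by
  obtain ⟨f', hf', hf'mem⟩ := hX.exists_isLocallyConstant_mem
    (fun y => {x | (φ x ∩ ball y δ).Nonempty} ∩ f ⁻¹' ball y ε)
    (fun y => (hφ _ isOpen_ball).inter (isOpen_ball.preimage hf))
    (fun x => (hfφ x).imp fun y ⟨hyφ, hyf⟩ => ⟨⟨y, hyφ, mem_ball_self hδ⟩, mem_ball_comm.1 hyf⟩)
  exact ⟨f', hf'.continuous, fun x => (hf'mem x).1, fun x => (hf'mem x).2⟩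

end Approximation

theorem exists_continuous_selection [MetricSpace Y] [CompleteSpace Y] {φ : X → Set Y}
    (hφ : IsLowerSemicontinuousMultimap φ) (hne : ∀ x, (φ x).Nonempty)
    (hcl : ∀ x, IsClosed (φ x)) : ∃ f : X → Y, Continuous f ∧ ∀ x, f x ∈ φ x := by
  obtain ⟨F, hF⟩ := exists_seq_of_forall_exists_succ
    (fun n f => Continuous f ∧ ∀ x, (φ x ∩ ball (f x) ((1 / 2 : ℝ) ^ n)).Nonempty)
    (fun n f f' => ∀ x, dist (f x) (f' x) < (1 / 2 : ℝ) ^ n)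
    (hX.exists_continuous_inter_ball_nonempty hφ hne (by positivity))
    (fun n f hf => (hX.exists_continuous_dist_lt_of_inter_ball_nonempty hφ hf.1 (by positivity)
      hf.2).imp fun _ h => ⟨⟨h.1, h.2.1⟩, h.2.2⟩)
  obtain ⟨f, hFf⟩ := exists_tendstoUniformly_of_dist_succ_le_geometric (C := 1) (r := 1 / 2)
    (by norm_num) (by norm_num) fun n x => by simpa using ((hF n).2 x).le
  refine ⟨f, hFf.continuous (Eventually.of_forall fun n => (hF n).1.1).frequently, fun x => ?_⟩
  exact (hcl x).mem_of_tendsto_of_inter_ball_nonempty (hFf.tendsto_at x)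
    (tendsto_pow_atTop_nhds_zero_of_lt_one (by norm_num) (by norm_num)) fun n => (hF n).1.2 x

end HasDisjointOpenRefinements

section Pin

variable {A : Set X} {φ : X → Set Y} {g : A → Y}

open Classical in
noncomputable def pinOn (φ : X → Set Y) (g : A → Y) (x : X) : Set Y :=
  if h : x ∈ A then {g ⟨x, h⟩} else φ x

theorem pinOn_of_mem {x : X} (hx : x ∈ A) : pinOn φ g x = {g ⟨x, hx⟩} := by
  rw [pinOn, dif_pos hx]

theorem pinOn_of_notMem {x : X} (hx : x ∉ A) : pinOn φ g x = φ x := by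
  rw [pinOn, dif_neg hx]

theorem pinOn_subset (hgφ : ∀ a : A, g a ∈ φ a) (x : X) : pinOn φ g x ⊆ φ x := by
  by_cases hx : x ∈ A
  · simpa [pinOn_of_mem hx] using hgφ ⟨x, hx⟩
  · rw [pinOn_of_notMem hx]

theorem pinOn_nonempty (hne : ∀ x, (φ x).Nonempty) (x : X) : (pinOn φ g x).Nonempty := by
  by_cases hx : x ∈ A
  · simp [pinOn_of_mem hx]
  · simpa [pinOn_of_notMem hx] using hne x

theorem isClosed_pinOn [TopologicalSpace Y] [T1Space Y] (hcl : ∀ x, IsClosed (φ x)) (x : X) :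
    IsClosed (pinOn φ g x) := by
  by_cases hx : x ∈ A
  · simp [pinOn_of_mem hx]
  · simpa [pinOn_of_notMem hx] using hcl x

theorem isLowerSemicontinuousMultimap_pinOn [TopologicalSpace X] [TopologicalSpace Y]
    (hφ : IsLowerSemicontinuousMultimap φ) (hA : IsClosed A) (hg : Continuous g)
    (hgφ : ∀ a : A, g a ∈ φ a) : IsLowerSemicontinuousMultimap (pinOn φ g) := by
  intro U hU
  obtain ⟨V, hV, hVg⟩ := isOpen_induced_iff.1 (hU.preimage hg)
  suffices {x | (pinOn φ g x ∩ U).Nonempty} = {x | (φ x ∩ U).Nonempty} ∩ (Aᶜ ∪ V) by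
    rw [this]
    exact (hφ U hU).inter (hA.isOpen_compl.union hV)
  ext x
  by_cases hx : x ∈ A
  · have hxV : x ∈ V ↔ g ⟨x, hx⟩ ∈ U := Set.ext_iff.1 hVg ⟨x, hx⟩
    simp only [mem_ofPred_eq, pinOn_of_mem hx, singleton_inter_nonempty, mem_inter_iff,
      mem_union, mem_compl_iff, hx, not_true_eq_false, false_or, hxV]
    exact ⟨fun h => ⟨⟨_, hgφ ⟨x, hx⟩, h⟩, h⟩, And.right⟩
  · simp [pinOn_of_notMem hx, hx]

end Pin

end

theorem zero_dimensional_selection_extension_general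
    {X : Type*} [TopologicalSpace X]
    (hdim : ∀ 𝒰 : Set (Set X), (∀ U ∈ 𝒰, IsOpen U) → ⋃₀ 𝒰 = Set.univ →
      ∃ 𝒱 : Set (Set X), (∀ V ∈ 𝒱, IsOpen V) ∧ (∀ V ∈ 𝒱, ∃ U ∈ 𝒰, V ⊆ U) ∧
        ⋃₀ 𝒱 = Set.univ ∧ 𝒱.Pairwise Disjoint)
    {Y : Type*} [MetricSpace Y] [CompleteSpace Y]
    (A : Set X) (hA : IsClosed A)
    (φ : X → Set Y)
    (hlsc : ∀ U : Set Y, IsOpen U → IsOpen {x | (φ x ∩ U).Nonempty})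
    (hne : ∀ x, (φ x).Nonempty)
    (hcl : ∀ x, IsClosed (φ x))
    (g : A → Y) (hg : Continuous g) (hgsel : ∀ a : A, g a ∈ φ a) :
    ∃ f : X → Y, Continuous f ∧ (∀ x, f x ∈ φ x) ∧ ∀ a : A, f a = g a := by
  obtain ⟨f, hf, hfg⟩ := HasDisjointOpenRefinements.exists_continuous_selection hdim
    (isLowerSemicontinuousMultimap_pinOn hlsc hA hg hgsel) (pinOn_nonempty hne)
    (isClosed_pinOn hcl)
  refine ⟨f, hf, fun x => pinOn_subset hgsel x (hfg x), fun a => ?_⟩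
  simpa [pinOn_of_mem a.2] using hfg a

/-- Selection-extension form of the zero-dimensional selection theorem. -/
theorem zero_dimensional_selection_extension
    {X : Type*} [TopologicalSpace X] [ParacompactSpace X]
    (hdim : ∀ 𝒰 : Set (Set X), (∀ U ∈ 𝒰, IsOpen U) → ⋃₀ 𝒰 = Set.univ →
      ∃ 𝒱 : Set (Set X), (∀ V ∈ 𝒱, IsOpen V) ∧ (∀ V ∈ 𝒱, ∃ U ∈ 𝒰, V ⊆ U) ∧
        ⋃₀ 𝒱 = Set.univ ∧ 𝒱.Pairwise Disjoint)
    {Y : Type*} [MetricSpace Y] [CompleteSpace Y]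
    (A : Set X) (hA : IsClosed A)
    (φ : X → Set Y)
    (hlsc : ∀ U : Set Y, IsOpen U → IsOpen {x | (φ x ∩ U).Nonempty})
    (hne : ∀ x, (φ x).Nonempty)
    (hcl : ∀ x, IsClosed (φ x))
    (g : A → Y) (hg : Continuous g) (hgsel : ∀ a : A, g a ∈ φ a) :
    ∃ f : X → Y, Continuous f ∧ (∀ x, f x ∈ φ x) ∧ ∀ a : A, f a = g a :=
  zero_dimensional_selection_extension_general hdim A hA φ hlsc hne hcl g hg hgsel
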